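/- arXiv:1712.02207 — 6 statements merged into one kernel-verified Lean document; each statement's English description precedes it below -/
import Mathlib

section
/- Let O, A, B, C, D be points in the Euclidean plane ℝ², let M be the midpoint of AC and N the midpoint of BD, and write [PQR] = ½·ω(Q−P, R−P) for the signed area of triangle PQR, where ω is the standard area form. Then [OAB] + [OCD] = [OBC] + [ODA] if and only if the points O, M, N are collinear. -/
/-- The standard area form on ℝ²: ω(u, v) = u₀v₁ − u₁v₀. -/
noncomputable def areaForm2 (u v : EuclideanSpace ℝ (Fin 2)) : ℝ :=
  u 0 * v 1 - u 1 * v 0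

/-- Signed area of triangle PQR: [PQR] = ½·ω(Q−P, R−P). -/
noncomputable def signedArea (P Q R : EuclideanSpace ℝ (Fin 2)) : ℝ :=
  areaForm2 (Q - P) (R - P) / 2

/-- Three points in ℝ² are collinear iff the cross product of the difference
vectors vanishes. -/
lemma collinear_cross (p q r : EuclideanSpace ℝ (Fin 2)) :
    Collinear ℝ ({p, q, r} : Set (EuclideanSpace ℝ (Fin 2))) ↔
      (q - p) 0 * (r - p) 1 - (q - p) 1 * (r - p) 0 = 0 := by
  rw [collinear_iff_of_mem (Set.mem_insert p {q, r})]
  constructor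
  · rintro ⟨v, hv⟩
    obtain ⟨a, ha⟩ := hv q (by simp)
    obtain ⟨b, hb⟩ := hv r (by simp)
    have hq : q - p = a • v := by rw [ha]; abel_nf; simp [vadd_eq_add]
    have hr : r - p = b • v := by rw [hb]; abel_nf; simp [vadd_eq_add]
    rw [hq, hr]
    simp only [PiLp.smul_apply, smul_eq_mul]
    ring
  · intro h
    by_cases hq : q - p = 0
    · have hqp : q = p := sub_eq_zero.mp hq
      refine ⟨r - p, fun x hx => ?_⟩
      rcases hx with h1 | h1 | h1 <;> rw [h1]
      · exact ⟨0, by simp [vadd_eq_add]⟩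
      · exact ⟨0, by simp [vadd_eq_add, hqp]⟩
      · exact ⟨1, by simp [vadd_eq_add]⟩
    · have h0 : (q - p) 0 ≠ 0 ∨ (q - p) 1 ≠ 0 := by
        by_contra hc
        push_neg at hc
        apply hq
        ext i
        fin_cases i <;> simp [hc.1, hc.2]
      refine ⟨q - p, fun x hx => ?_⟩
      rcases hx with h1 | h1 | h1 <;> rw [h1]
      · exact ⟨0, by simp [vadd_eq_add]⟩
      · exact ⟨1, by simp [vadd_eq_add]⟩
      · rcases h0 with h0 | h0
        · refine ⟨(r - p) 0 / (q - p) 0, ?_⟩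
          have key : r - p = ((r - p) 0 / (q - p) 0) • (q - p) := by
            have h' := h
            simp only [PiLp.sub_apply] at h' h0
            ext i
            fin_cases i <;>
              simp only [PiLp.smul_apply, PiLp.sub_apply, smul_eq_mul, div_mul_eq_mul_div,
                Fin.mk_zero, Fin.mk_one, Fin.isValue, eq_div_iff h0] <;> nlinarith [h']
          rw [vadd_eq_add, ← key]; abel
        · refine ⟨(r - p) 1 / (q - p) 1, ?_⟩
          have key : r - p = ((r - p) 1 / (q - p) 1) • (q - p) := by
            have h' := h
            simp only [PiLp.sub_apply] at h' h0
            ext i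
            fin_cases i <;>
              simp only [PiLp.smul_apply, PiLp.sub_apply, smul_eq_mul, div_mul_eq_mul_div,
                Fin.mk_zero, Fin.mk_one, Fin.isValue, eq_div_iff h0] <;> nlinarith [h']
          rw [vadd_eq_add, ← key]; abel

/-- **Léon Anne's theorem.** For points O, A, B, C, D in ℝ², with M the midpoint
of AC and N the midpoint of BD, one has [OAB] + [OCD] = [OBC] + [ODA] if and
only if O, M, N are collinear. -/
theorem leon_anne (O A B C D : EuclideanSpace ℝ (Fin 2)) :
    signedArea O A B + signedArea O C D = signedArea O B C + signedArea O D A ↔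
      Collinear ℝ ({O, midpoint ℝ A C, midpoint ℝ B D} :
        Set (EuclideanSpace ℝ (Fin 2))) := by
  rw [collinear_cross]
  simp only [signedArea, areaForm2, midpoint_eq_smul_add, PiLp.sub_apply, PiLp.add_apply,
    PiLp.smul_apply, smul_eq_mul, invOf_eq_inv]
  constructor <;> intro h
  · linear_combination h / 2
  · linear_combination 2 * h
end

section
/- Let A, B, C, D, O be points in the Euclidean plane ℝ², let M be the midpoint of AC and N the midpoint of BD. If O, M, N are collinear, then [OAB] + [OCD] = ½·([OAB] + [OBC] + [OCD] + [ODA]), i.e., the two triangles on sides AB and CD cut off by O account for exactly half of the total signed area of the quadrilateral ABCD. -/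
/-- If O lies on the Newton line of ABCD (O is collinear with the midpoints M
of AC and N of BD), then [OAB] + [OCD] = ½·([OAB] + [OBC] + [OCD] + [ODA]). -/
theorem newton_line_halves_area (A B C D O : EuclideanSpace ℝ (Fin 2))
    (h : Collinear ℝ ({O, midpoint ℝ A C, midpoint ℝ B D} :
      Set (EuclideanSpace ℝ (Fin 2)))) :
    signedArea O A B + signedArea O C D =
      (signedArea O A B + signedArea O B C + signedArea O C D +
        signedArea O D A) / 2 := by
  rw [collinear_iff_of_mem (Set.mem_insert O _)] at h
  obtain ⟨v, hv⟩ := h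
  obtain ⟨rM, hM⟩ := hv (midpoint ℝ A C) (by simp)
  obtain ⟨rN, hN⟩ := hv (midpoint ℝ B D) (by simp)
  have hM0 := congrArg (fun x => x 0) hM
  have hM1 := congrArg (fun x => x 1) hM
  have hN0 := congrArg (fun x => x 0) hN
  have hN1 := congrArg (fun x => x 1) hN
  simp only [midpoint_eq_smul_add, PiLp.smul_apply, PiLp.add_apply, smul_eq_mul, invOf_eq_inv,
    vadd_eq_add] at hM0 hM1 hN0 hN1
  simp only [signedArea, areaForm2, PiLp.sub_apply]
  linear_combination ((B 1 + D 1 - 2*O 1)/2) * hM0 - ((B 0 + D 0 - 2*O 0)/2) * hM1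
    + rM*(v 0) * hN1 - rM*(v 1) * hN0
end

section
/- Let ABCD be a convex quadrilateral in the Euclidean plane ℝ² (vertices in convex position, listed counterclockwise), with area 𝒜 = ½·ω(C−A, D−B) > 0, and let a = dist(A,B), c = dist(C,D). Let I₁ be a point in the interior of the convex hull of {A,B,C,D} that is collinear with the midpoints M of AC and N of BD, and suppose the distance from I₁ to the line AB and the distance from I₁ to the line CD both equal r₁. Then (a + c)·r₁ = 𝒜. -/
/-- Distance from a point P to the line through X and Y. -/
noncomputable def distToLine (P X Y : EuclideanSpace ℝ (Fin 2)) : ℝ :=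
  Metric.infDist P (affineSpan ℝ ({X, Y} : Set (EuclideanSpace ℝ (Fin 2))) :
    Set (EuclideanSpace ℝ (Fin 2)))

lemma dist_sq' (X Y : EuclideanSpace ℝ (Fin 2)) :
    dist X Y ^ 2 = (X 0 - Y 0)^2 + (X 1 - Y 1)^2 := by
  rw [EuclideanSpace.dist_eq, Real.sq_sqrt (by positivity)]
  simp [Fin.sum_univ_two, Real.dist_eq, sq_abs]

lemma distToLine_mul (P X Y : EuclideanSpace ℝ (Fin 2)) (hXY : X ≠ Y) :
    distToLine P X Y * dist X Y = |areaForm2 (Y - X) (P - X)| := by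
  have hn : 0 < dist X Y := dist_pos.mpr hXY
  have hn2 : dist X Y ^ 2 = (Y 0 - X 0)^2 + (Y 1 - X 1)^2 := by
    rw [dist_sq' X Y]; ring
  have hS : (0:ℝ) < (Y 0 - X 0)^2 + (Y 1 - X 1)^2 := hn2 ▸ pow_pos hn 2
  have hωc : areaForm2 (Y - X) (P - X)
      = (Y 0 - X 0) * (P 1 - X 1) - (Y 1 - X 1) * (P 0 - X 0) := by
    simp [areaForm2]
  suffices h : distToLine P X Y = |areaForm2 (Y - X) (P - X)| / dist X Y by
    rw [h]; field_simp
  set ω := areaForm2 (Y - X) (P - X) with hω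
  set t₀ : ℝ := ((P 0 - X 0)*(Y 0 - X 0) + (P 1 - X 1)*(Y 1 - X 1)) /
    ((Y 0 - X 0)^2 + (Y 1 - X 1)^2) with ht₀
  set q₀ : EuclideanSpace ℝ (Fin 2) := t₀ • (Y - X) + X with hq₀
  have hmem : q₀ ∈ (affineSpan ℝ ({X, Y} : Set (EuclideanSpace ℝ (Fin 2))) :
      Set (EuclideanSpace ℝ (Fin 2))) := by
    have := AffineMap.lineMap_mem_affineSpan_pair t₀ X Y
    simpa [AffineMap.lineMap_apply, hq₀, vsub_eq_sub, vadd_eq_add] using this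
  have hq₀i : ∀ i, q₀ i = t₀ * (Y i - X i) + X i := by
    intro i; simp [hq₀]
  have hdq : dist P q₀ = |ω| / dist X Y := by
    have h2 : dist P q₀ ^ 2 = (|ω| / dist X Y)^2 := by
      rw [dist_sq', div_pow, sq_abs, hn2, hq₀i 0, hq₀i 1, hωc, ht₀]
      field_simp
      ring
    exact (sq_eq_sq₀ dist_nonneg (by positivity)).mp h2
  apply le_antisymm
  · rw [← hdq]; exact Metric.infDist_le_dist_of_mem hmem
  · by_contra hcon
    push_neg at hcon
    obtain ⟨y, hy, hlt⟩ := (Metric.infDist_lt_iff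
      ⟨X, subset_affineSpan ℝ _ (by simp)⟩).mp hcon
    obtain ⟨t, ht⟩ := vadd_left_mem_affineSpan_pair.mp
      (show (y - X) +ᵥ X ∈ affineSpan ℝ ({X, Y} : Set (EuclideanSpace ℝ (Fin 2))) by
        simpa [vadd_eq_add, sub_add_cancel] using hy)
    have hyi : ∀ i, y i = t * (Y i - X i) + X i := by
      intro i
      have := congrArg (fun z : EuclideanSpace ℝ (Fin 2) => z i) ht
      simp [vsub_eq_sub] at this
      linarith [this]
    have h1 : dist P y ^ 2 = (P 0 - (t * (Y 0 - X 0) + X 0))^2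
        + (P 1 - (t * (Y 1 - X 1) + X 1))^2 := by
      rw [dist_sq', hyi 0, hyi 1]
    rw [lt_div_iff₀ hn] at hlt
    have key : dist P y ^ 2 * dist X Y ^ 2 - ω^2 =
        ((Y 0 - X 0)*(P 0 - t*(Y 0 - X 0) - X 0)
          + (Y 1 - X 1)*(P 1 - t*(Y 1 - X 1) - X 1))^2 := by
      rw [h1, hn2, hωc]; ring
    have key2 : |ω|^2 ≤ (dist P y * dist X Y)^2 := by
      rw [sq_abs, mul_pow]
      linarith [key, sq_nonneg ((Y 0 - X 0)*(P 0 - t*(Y 0 - X 0) - X 0)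
        + (Y 1 - X 1)*(P 1 - t*(Y 1 - X 1) - X 1))]
    have habs : |ω| ≤ dist P y * dist X Y :=
      (pow_le_pow_iff_left₀ (abs_nonneg ω)
        (mul_nonneg (dist_nonneg (x := P) (y := y)) hn.le) two_ne_zero).mp key2
    linarith

lemma signedArea_coord (X Y Z : EuclideanSpace ℝ (Fin 2)) :
    signedArea X Y Z = ((Y 0 - X 0)*(Z 1 - X 1) - (Y 1 - X 1)*(Z 0 - X 0))/2 := by
  simp [signedArea, areaForm2]

lemma signedArea_cyc (P Q R : EuclideanSpace ℝ (Fin 2)) :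
    signedArea P Q R = signedArea Q R P := by
  simp only [signedArea_coord]; ring

lemma sA_pos_of_interior {X Y : EuclideanSpace ℝ (Fin 2)} (hXY : X ≠ Y)
    {s : Set (EuclideanSpace ℝ (Fin 2))} (hs : ∀ z ∈ s, 0 ≤ signedArea X Y z)
    {I : EuclideanSpace ℝ (Fin 2)} (hI : I ∈ interior (convexHull ℝ s)) :
    0 < signedArea X Y I := by
  have hconvex : Convex ℝ {P : EuclideanSpace ℝ (Fin 2) | 0 ≤ signedArea X Y P} := by
    intro P hP Q hQ a b ha hb hab
    simp only [Set.mem_setOf_eq, signedArea_coord] at hP hQ ⊢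
    have h0 : (a • P + b • Q : EuclideanSpace ℝ (Fin 2)) 0 = a * P 0 + b * Q 0 := by simp
    have h1 : (a • P + b • Q : EuclideanSpace ℝ (Fin 2)) 1 = a * P 1 + b * Q 1 := by simp
    rw [h0, h1]
    have key : ((Y 0 - X 0)*((a * P 1 + b * Q 1) - X 1)
        - (Y 1 - X 1)*((a * P 0 + b * Q 0) - X 0))/2
        = a * (((Y 0 - X 0)*(P 1 - X 1) - (Y 1 - X 1)*(P 0 - X 0))/2)
        + b * (((Y 0 - X 0)*(Q 1 - X 1) - (Y 1 - X 1)*(Q 0 - X 0))/2) := by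
      linear_combination ((((Y 1 - X 1) * X 0 - (Y 0 - X 0) * X 1)/2) + (Y 0 * X 1 - X 0 * Y 1)) * hab
    rw [key]
    have := mul_nonneg ha hP
    have := mul_nonneg hb hQ
    linarith
  have hsub : convexHull ℝ s ⊆ {P : EuclideanSpace ℝ (Fin 2) | 0 ≤ signedArea X Y P} :=
    convexHull_min hs hconvex
  have h0 : 0 ≤ signedArea X Y I := hsub (interior_subset hI)
  rcases h0.lt_or_eq with h | h
  · exact h
  exfalso
  have hne : ¬(X 0 = Y 0 ∧ X 1 = Y 1) := by
    rintro ⟨h0', h1'⟩; exact hXY (by ext i; fin_cases i <;> assumption)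
  have hu : 0 < (Y 0 - X 0)^2 + (Y 1 - X 1)^2 := by
    rcases not_and_or.mp hne with h' | h'
    · have hne0 : Y 0 - X 0 ≠ 0 := fun hc => h' (by linarith [sub_eq_zero.mp hc])
      positivity
    · have hne1 : Y 1 - X 1 ≠ 0 := fun hc => h' (by linarith [sub_eq_zero.mp hc])
      positivity
  obtain ⟨ε, hε, hball⟩ := Metric.isOpen_iff.mp isOpen_interior I hI
  set w : EuclideanSpace ℝ (Fin 2) :=
    (WithLp.equiv 2 (Fin 2 → ℝ)).symm ![Y 1 - X 1, -(Y 0 - X 0)] with hw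
  have hw0 : w 0 = Y 1 - X 1 := by simp [hw]
  have hw1 : w 1 = -(Y 0 - X 0) := by simp [hw]
  set δ : ℝ := ε / (2 * (‖w‖ + 1)) with hδdef
  have hδ : 0 < δ := by
    have : (0:ℝ) < ‖w‖ + 1 := by positivity
    positivity
  set z : EuclideanSpace ℝ (Fin 2) := I + δ • w with hz
  have hzI : dist z I < ε := by
    have : dist z I = |δ| * ‖w‖ := by
      rw [dist_eq_norm, hz, add_sub_cancel_left, norm_smul, Real.norm_eq_abs]
    rw [this, abs_of_pos hδ]
    have h1 : δ * ‖w‖ < δ * (‖w‖ + 1) := by nlinarith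
    have h2 : δ * (‖w‖ + 1) = ε / 2 := by
      rw [hδdef]; field_simp
    linarith
  have hzhull : z ∈ convexHull ℝ s := interior_subset (hball hzI)
  have hz0 : 0 ≤ signedArea X Y z := hsub hzhull
  have hzc : ∀ i, z i = I i + δ * w i := by intro i; simp [hz]
  rw [signedArea_coord] at hz0 h
  rw [hzc 0, hzc 1, hw0, hw1] at hz0
  nlinarith [hz0, hu, hδ]

/-- A, B, C, D are in convex position (no vertex in the convex hull of the
other three) and listed counterclockwise (all vertex triangles have positive
signed area). -/
def ConvexQuadCCW (A B C D : EuclideanSpace ℝ (Fin 2)) : Prop :=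
  (A ∉ convexHull ℝ ({B, C, D} : Set (EuclideanSpace ℝ (Fin 2)))) ∧
  (B ∉ convexHull ℝ ({A, C, D} : Set (EuclideanSpace ℝ (Fin 2)))) ∧
  (C ∉ convexHull ℝ ({A, B, D} : Set (EuclideanSpace ℝ (Fin 2)))) ∧
  (D ∉ convexHull ℝ ({A, B, C} : Set (EuclideanSpace ℝ (Fin 2)))) ∧
  0 < signedArea A B C ∧ 0 < signedArea B C D ∧
  0 < signedArea C D A ∧ 0 < signedArea D A B

/-- If I₁ is an interior point of the convex quadrilateral ABCD lying on its
Newton line, equidistant (distance r₁) from the lines AB and CD, then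
(AB + CD)·r₁ = 𝒜 where 𝒜 = ½·ω(C−A, D−B) is the area of ABCD. -/
theorem incenter_one_pair (A B C D I₁ : EuclideanSpace ℝ (Fin 2)) (r₁ : ℝ)
    (hconv : ConvexQuadCCW A B C D)
    (hA : 0 < areaForm2 (C - A) (D - B) / 2)
    (hI₁ : I₁ ∈ interior (convexHull ℝ
      ({A, B, C, D} : Set (EuclideanSpace ℝ (Fin 2)))))
    (hNewton : Collinear ℝ ({I₁, midpoint ℝ A C, midpoint ℝ B D} :
      Set (EuclideanSpace ℝ (Fin 2))))
    (h₁ : distToLine I₁ A B = r₁) (h₂ : distToLine I₁ C D = r₁) :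
    (dist A B + dist C D) * r₁ = areaForm2 (C - A) (D - B) / 2 := by
  obtain ⟨-, -, -, -, hABC, hBCD, hCDA, hDAB⟩ := hconv
  have hAB : A ≠ B := by
    rintro rfl
    rw [signedArea_coord] at hABC; simp at hABC
  have hCD : C ≠ D := by
    rintro rfl
    rw [signedArea_coord] at hCDA; simp at hCDA
  -- positivity of the two triangle areas at I₁
  have hposAB : 0 < signedArea A B I₁ := by
    refine sA_pos_of_interior hAB ?_ hI₁
    rintro z hz
    simp only [Set.mem_insert_iff, Set.mem_singleton_iff] at hz
    rcases hz with rfl | rfl | rfl | rfl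
    · rw [signedArea_coord]; simp
    · rw [signedArea_coord]; ring_nf; simp
    · exact hABC.le
    · rw [signedArea_cyc] at hDAB
      exact hDAB.le
  have hposCD : 0 < signedArea C D I₁ := by
    refine sA_pos_of_interior hCD ?_ hI₁
    rintro z hz
    simp only [Set.mem_insert_iff, Set.mem_singleton_iff] at hz
    rcases hz with rfl | rfl | rfl | rfl
    · exact hCDA.le
    · rw [signedArea_cyc] at hBCD; exact hBCD.le
    · rw [signedArea_coord]; simp
    · rw [signedArea_coord]; ring_nf; simp
  -- Newton line identity
  have hMmem : midpoint ℝ A C ∈ ({I₁, midpoint ℝ A C, midpoint ℝ B D} :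
      Set (EuclideanSpace ℝ (Fin 2))) := by simp
  obtain ⟨v, hv⟩ := (collinear_iff_of_mem hMmem).mp hNewton
  obtain ⟨t₁, ht₁⟩ := hv I₁ (by simp)
  obtain ⟨t₂, ht₂⟩ := hv (midpoint ℝ B D) (by simp)
  have hmid : ∀ (P Q : EuclideanSpace ℝ (Fin 2)) (i : Fin 2),
      midpoint ℝ P Q i = (P i + Q i)/2 := by
    intro P Q i; rw [midpoint_eq_smul_add]; simp; ring
  have ht₁i : ∀ i, I₁ i = t₁ * v i + (A i + C i)/2 := by
    intro i
    have := congrArg (fun z : EuclideanSpace ℝ (Fin 2) => z i) ht₁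
    simpa [vadd_eq_add, hmid] using this
  have ht₂i : ∀ i, (B i + D i)/2 = t₂ * v i + (A i + C i)/2 := by
    intro i
    have := congrArg (fun z : EuclideanSpace ℝ (Fin 2) => z i) ht₂
    simpa [vadd_eq_add, hmid] using this
  have hkey : signedArea A B I₁ + signedArea C D I₁
      = areaForm2 (C - A) (D - B) / 4 := by
    have hω : areaForm2 (C - A) (D - B)
        = (C 0 - A 0) * (D 1 - B 1) - (C 1 - A 1) * (D 0 - B 0) := by
      simp [areaForm2]
    rw [signedArea_coord, signedArea_coord, hω, ht₁i 0, ht₁i 1]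
    linear_combination (t₁ * v 1) * ht₂i 0 - (t₁ * v 0) * ht₂i 1
  -- distances
  have hd1 : dist A B * r₁ = 2 * signedArea A B I₁ := by
    have := distToLine_mul I₁ A B hAB
    rw [h₁] at this
    have harea : areaForm2 (B - A) (I₁ - A) = 2 * signedArea A B I₁ := by
      simp [signedArea]; ring
    rw [harea, abs_of_pos (by linarith)] at this
    linarith [this]
  have hd2 : dist C D * r₁ = 2 * signedArea C D I₁ := by
    have := distToLine_mul I₁ C D hCD
    rw [h₂] at this
    have harea : areaForm2 (D - C) (I₁ - C) = 2 * signedArea C D I₁ := by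
      simp [signedArea]; ring
    rw [harea, abs_of_pos (by linarith)] at this
    linarith [this]
  nlinarith [hd1, hd2, hkey]
end

section
/- Let ABCD be a convex cyclic quadrilateral in the Euclidean plane ℝ² (the four vertices are concyclic and in convex position), let e = dist(A,C), f = dist(B,D), let M be the midpoint of AC and N the midpoint of BD, and set I = (f/(e+f))·M + (e/(e+f))·N (the point of segment MN dividing it in ratio MI : IN = e : f). Then the distance from I to the line AB equals the distance from I to the line CD, and the distance from I to the line BC equals the distance from I to the line DA. -/
set_option maxHeartbeats 1600000


/-- A, B, C, D are in convex position: no vertex lies in the convex hull of the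
other three. -/
def ConvexPosition (A B C D : EuclideanSpace ℝ (Fin 2)) : Prop :=
  (A ∉ convexHull ℝ ({B, C, D} : Set (EuclideanSpace ℝ (Fin 2)))) ∧
  (B ∉ convexHull ℝ ({A, C, D} : Set (EuclideanSpace ℝ (Fin 2)))) ∧
  (C ∉ convexHull ℝ ({A, B, D} : Set (EuclideanSpace ℝ (Fin 2)))) ∧
  (D ∉ convexHull ℝ ({A, B, C} : Set (EuclideanSpace ℝ (Fin 2))))

namespace CyclicNewtonAux

/-- Squared circumradius identity: for `y`, `z` on the circle centred at the
origin through `x`, `4‖x‖² · det(y-x, z-x)² = ‖y-x‖² ‖z-y‖² ‖z-x‖²`. -/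
lemma circ6 (x1 x2 y1 y2 z1 z2 : ℝ)
    (hy : y1^2+y2^2 = x1^2+x2^2) (hz : z1^2+z2^2 = x1^2+x2^2) :
    4*(x1^2+x2^2) * ((y1-x1)*(z2-x2)-(y2-x2)*(z1-x1))^2
      = ((y1-x1)^2+(y2-x2)^2) * ((z1-y1)^2+(z2-y2)^2) * ((z1-x1)^2+(z2-x2)^2) := by
  linear_combination (2*x2^4 - 2*x1^4 - 4*z2*x2^3 - 4*z2*x1^2*x2 + z2^2*x2^2 + z2^2*x1^2 + 2*z2^3*x2 - z2^4 + 8*z1*z2*x1*x2 - 2*z1*z2^2*x1 - 3*z1^2*x2^2 + 5*z1^2*x1^2 + 2*z1^2*z2*x2 - 2*z1^2*z2^2 - 2*z1^3*x1 - z1^4 + 2*y2*x2^3 + 2*y2*x1^2*x2 - 2*y2*z2*x2^2 + 2*y2*z2*x1^2 - 2*y2*z2^2*x2 + 2*y2*z2^3 - 4*y2*z1*x1*x2 - 4*y2*z1*z2*x1 + 2*y2*z1^2*x2 + 2*y2*z1^2*z2 - y2^2*x2^2 - y2^2*x1^2 + 2*y2^2*z2*x2 - y2^2*z2^2 + 2*y2^2*z1*x1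 - y2^2*z1^2 + 2*y1*x1*x2^2 + 2*y1*x1^3 - 4*y1*z2*x1*x2 + 2*y1*z2^2*x1 + 2*y1*z1*x2^2 - 2*y1*z1*x1^2 - 4*y1*z1*z2*x2 + 2*y1*z1*z2^2 - 2*y1*z1^2*x1 + 2*y1*z1^3 - y1^2*x2^2 - y1^2*x1^2 + 2*y1^2*z2*x2 - y1^2*z2^2 + 2*y1^2*z1*x1 - y1^2*z1^2) * hy + (-2*x2^4 + 2*x1^4 + 4*z2*x2^3 + 4*z2*x1^2*x2 - 2*z2^2*x2^2 - 2*z2^2*x1^2 - 2*z1^2*x2^2 - 2*z1^2*x1^2 - 2*y2*x2^3 - 2*y2*x1^2*x2 + 4*y2*z2*x1^2 + 2*y2*z2^2*x2 - 4*y2*z1*x1*x2 + 2*y2*z1^2*x2 + 4*y2^2*x2^2 - 4*y2^2*x1^2 - 4*y2^2*z2*x2 + 4*y2^2*z1*x1 - 2*y1*x1*x2^2 - 2*y1*x1^3 - 4*y1*z2*x1*x2 + 2*y1*z2^2*x1 + 4*y1*z1*x2^2 + 2*y1*z1^2*x1 + 8*y1*y2*x1*x2 - 4*y1*y2*z2*x1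 - 4*y1*y2*z1*x2) * hz

lemma crossId (a1 a2 b1 b2 c1 c2 d1 d2 : ℝ)
    (hb : b1^2+b2^2 = a1^2+a2^2) (hc : c1^2+c2^2 = a1^2+a2^2)
    (hd : d1^2+d2^2 = a1^2+a2^2) :
    ((b1-a1)*(c2-a2)-(b2-a2)*(c1-a1))*((b1-a1)*(d2-a2)-(b2-a2)*(d1-a1))*((c1-d1)^2+(c2-d2)^2) = ((d1-c1)*(a2-c2)-(d2-c2)*(a1-c1))*((d1-c1)*(b2-c2)-(d2-c2)*(b1-c1))*((a1-b1)^2+(a2-b2)^2) := by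
  linear_combination (d2^2*a2^2 + 2*d2^2*a1^2 - d2^3*a2 - 2*d1*d2*a1*a2 + d1^2*a2^2 - d1^2*d2*a2 - 2*c2*d2*a2^2 - 4*c2*d2*a1^2 + c2*d2^2*a2 + c2*d2^3 + 2*c2*d1*a1*a2 + c2*d1*d2*a1 + c2*d1^2*d2 + c2^2*a2^2 + 2*c2^2*a1^2 + c2^2*d2*a2 - 2*c2^2*d2^2 - c2^2*d1*a1 - c2^2*d1^2 - c2^3*a2 + c2^3*d2 + 2*c1*d2*a1*a2 - c1*d2^2*a1 - 2*c1*d1*a2^2 + c1*d1*d2*a2 - 2*c1*c2*a1*a2 + c1*c2*d2*a1 + c1*c2*d1*a2 + c1^2*a2^2 - c1^2*d2^2 - c1^2*c2*a2 + c1^2*c2*d2 + b2*d1*d2*a1 - b2*d1^2*a2 - b2*c2*d1*a1 + b2*c2*d1^2 - b2*c1*d2*a1 + 2*b2*c1*d1*a2 - b2*c1*d1*d2 + b2*c1*c2*a1 - b2*c1*c2*d1 - b2*c1^2*a2 + b2*c1^2*d2 - b1*d2^2*a1 + b1*d1*d2*a2 + 2*b1*c2*d2*a1 - b1*c2*d1*a2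 - b1*c2*d1*d2 - b1*c2^2*a1 + b1*c2^2*d1 - b1*c1*d2*a2 + b1*c1*d2^2 + b1*c1*c2*a2 - b1*c1*c2*d2) * hb + (a2^4 + a1^2*a2^2 + d2*a2^3 + d2*a1^2*a2 - 2*d2^2*a2^2 - 2*d2^2*a1^2 + 2*d1*d2*a1*a2 - 2*d1^2*a2^2 - c2*a2^3 - c2*a1^2*a2 + c2*d2*a2^2 + 2*c2*d2*a1^2 - c2*d1*a1*a2 - c1*d2*a1*a2 + c1*d1*a2^2 - 2*b2*a2^3 - 2*b2*a1^2*a2 + b2*d2*a1^2 + 2*b2*d2^2*a2 - b2*d1*a1*a2 - 2*b2*d1*d2*a1 + 4*b2*d1^2*a2 - b2*c2*a1^2 + b2*c2*d1*a1 + b2*c1*a1*a2 + b2*c1*d2*a1 - 2*b2*c1*d1*a2 + b2^2*a2^2 + b2^2*a1^2 - b2^2*d2*a2 + b2^2*d1*a1 - 2*b2^2*d1^2 + b2^2*c2*a2 - b2^2*c2*d2 - b2^2*c1*a1 + b2^2*c1*d1 - b1*d2*a1*a2 + 2*b1*d2^2*a1 + b1*d1*a2^2 - 2*b1*d1*d2*a2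 + b1*c2*a1*a2 - 2*b1*c2*d2*a1 + b1*c2*d1*a2 - b1*c1*a2^2 + b1*c1*d2*a2 - b1*b2*d2*a1 - b1*b2*d1*a2 + 2*b1*b2*d1*d2 + b1*b2*c2*a1 - b1*b2*c2*d1 + b1*b2*c1*a2 - b1*b2*c1*d2) * hc + (-a2^4 - a1^2*a2^2 - d2*a2^3 - d2*a1^2*a2 + c2*a2^3 + c2*a1^2*a2 + c2*d2*a2^2 + 2*c2*d2*a1^2 - c2*d1*a1*a2 - 2*c2^2*a1^2 - c1*d2*a1*a2 + c1*d1*a2^2 + 2*c1*c2*a1*a2 + 2*b2*a2^3 + 2*b2*a1^2*a2 - b2*d2*a1^2 + b2*d1*a1*a2 + b2*c2*a1^2 + b2*c2*d1*a1 - 2*b2*c2^2*a2 - b2*c1*a1*a2 + b2*c1*d2*a1 - 2*b2*c1*d1*a2 - 2*b2*c1*c2*a1 - b2^2*a2^2 - b2^2*a1^2 + b2^2*d2*a2 - b2^2*d1*a1 - b2^2*c2*a2 - b2^2*c2*d2 + 2*b2^2*c2^2 + b2^2*c1*a1 + b2^2*c1*d1 + b1*d2*a1*a2 - b1*d1*a2^2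 - b1*c2*a1*a2 - 2*b1*c2*d2*a1 + b1*c2*d1*a2 + 2*b1*c2^2*a1 + b1*c1*a2^2 + b1*c1*d2*a2 - 2*b1*c1*c2*a2 + b1*b2*d2*a1 + b1*b2*d1*a2 - b1*b2*c2*a1 - b1*b2*c2*d1 - b1*b2*c1*a2 - b1*b2*c1*d2 + 2*b1*b2*c1*c2) * hd

/-- The key algebraic identity behind the theorem, with the squared lengths of
the four sides as atoms `P Q R T` and the diagonals `e f`. -/
lemma scalarKey (a1 a2 b1 b2 c1 c2 d1 d2 e f P Q R T : ℝ) (h0 : 0 < a1^2+a2^2)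
    (hb : b1^2+b2^2 = a1^2+a2^2) (hc : c1^2+c2^2 = a1^2+a2^2)
    (hd : d1^2+d2^2 = a1^2+a2^2)
    (hP : P = ((a1-b1)^2+(a2-b2)^2)) (hQ : Q = ((b1-c1)^2+(b2-c2)^2)) (hR : R = ((c1-d1)^2+(c2-d2)^2)) (hT : T = ((d1-a1)^2+(d2-a2)^2))
    (he : e^2 = ((c1-a1)^2+(c2-a2)^2)) (hf : f^2 = ((d1-b1)^2+(d2-b2)^2)) :
    (f*((b1-a1)*(c2-a2)-(b2-a2)*(c1-a1)) + e*((b1-a1)*(d2-a2)-(b2-a2)*(d1-a1)))^2*R = (f*((d1-c1)*(a2-c2)-(d2-c2)*(a1-c1)) + e*((d1-c1)*(b2-c2)-(d2-c2)*(b1-c1)))^2*P := by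
  have I1 := circ6 a1 a2 b1 b2 c1 c2 hb hc
  have I2 := circ6 a1 a2 b1 b2 d1 d2 hb hd
  have I3 := circ6 c1 c2 d1 d2 a1 a2 (hd.trans hc.symm) hc.symm
  have I4 := circ6 c1 c2 d1 d2 b1 b2 (hd.trans hc.symm) (hb.trans hc.symm)
  have I1' : 4*(a1^2+a2^2)*((b1-a1)*(c2-a2)-(b2-a2)*(c1-a1))^2 = P*Q*e^2 := by
    linear_combination I1 - Q*e^2*hP - ((a1-b1)^2+(a2-b2)^2)*e^2*hQ - ((a1-b1)^2+(a2-b2)^2)*((b1-c1)^2+(b2-c2)^2)*he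
  have I2' : 4*(a1^2+a2^2)*((b1-a1)*(d2-a2)-(b2-a2)*(d1-a1))^2 = P*f^2*T := by
    linear_combination I2 - f^2*T*hP - ((a1-b1)^2+(a2-b2)^2)*T*hf - ((a1-b1)^2+(a2-b2)^2)*((d1-b1)^2+(d2-b2)^2)*hT
  have I3' : 4*(c1^2+c2^2)*((d1-c1)*(a2-c2)-(d2-c2)*(a1-c1))^2 = R*T*e^2 := by
    linear_combination I3 - T*e^2*hR - ((c1-d1)^2+(c2-d2)^2)*e^2*hT - ((c1-d1)^2+(c2-d2)^2)*((d1-a1)^2+(d2-a2)^2)*he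
  have I4' : 4*(c1^2+c2^2)*((d1-c1)*(b2-c2)-(d2-c2)*(b1-c1))^2 = R*f^2*Q := by
    linear_combination I4 - f^2*Q*hR - ((c1-d1)^2+(c2-d2)^2)*Q*hf - ((c1-d1)^2+(c2-d2)^2)*((d1-b1)^2+(d2-b2)^2)*hQ
  have h4 : (4*(a1^2+a2^2)) * ((f*((b1-a1)*(c2-a2)-(b2-a2)*(c1-a1)) + e*((b1-a1)*(d2-a2)-(b2-a2)*(d1-a1)))^2*R)
      = (4*(a1^2+a2^2)) * ((f*((d1-c1)*(a2-c2)-(d2-c2)*(a1-c1)) + e*((d1-c1)*(b2-c2)-(d2-c2)*(b1-c1)))^2*P) := by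
    have hcross := crossId a1 a2 b1 b2 c1 c2 d1 d2 hb hc hd
    have hcross' : ((b1-a1)*(c2-a2)-(b2-a2)*(c1-a1))*((b1-a1)*(d2-a2)-(b2-a2)*(d1-a1))*R = ((d1-c1)*(a2-c2)-(d2-c2)*(a1-c1))*((d1-c1)*(b2-c2)-(d2-c2)*(b1-c1))*P := by
      linear_combination hcross + ((b1-a1)*(c2-a2)-(b2-a2)*(c1-a1))*((b1-a1)*(d2-a2)-(b2-a2)*(d1-a1))*hR - ((d1-c1)*(a2-c2)-(d2-c2)*(a1-c1))*((d1-c1)*(b2-c2)-(d2-c2)*(b1-c1))*hP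
    linear_combination (f^2*R)*I1' + (e^2*R)*I2' - (f^2*P)*I3' - (e^2*P)*I4'
      + (4*P*(f^2*((d1-c1)*(a2-c2)-(d2-c2)*(a1-c1))^2 + e^2*((d1-c1)*(b2-c2)-(d2-c2)*(b1-c1))^2))*hc
      + (8*(a1^2+a2^2)*e*f)*hcross'
  exact mul_left_cancel₀ (by positivity) h4

end CyclicNewtonAux


namespace CyclicNewtonAux

lemma norm_sq_two (w : EuclideanSpace ℝ (Fin 2)) : ‖w‖^2 = (w 0)^2 + (w 1)^2 := by
  rw [EuclideanSpace.norm_eq, Real.sq_sqrt (by positivity)]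
  simp [Fin.sum_univ_two, sq_abs]

lemma dist_sq_two (X Y : EuclideanSpace ℝ (Fin 2)) :
    dist X Y ^ 2 = (X 0 - Y 0)^2 + (X 1 - Y 1)^2 := by
  rw [dist_eq_norm, norm_sq_two]
  simp [PiLp.sub_apply]

lemma distToLine_eq (P X Y : EuclideanSpace ℝ (Fin 2)) (h : X ≠ Y) :
    Metric.infDist P (affineSpan ℝ ({X, Y} : Set (EuclideanSpace ℝ (Fin 2))) :
      Set (EuclideanSpace ℝ (Fin 2)))
    = |(Y 0 - X 0) * (P 1 - X 1) - (Y 1 - X 1) * (P 0 - X 0)| / dist X Y := by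
  have hd : (0:ℝ) < dist X Y := dist_pos.2 h
  have hv : dist X Y ^ 2 = (Y 0 - X 0)^2 + (Y 1 - X 1)^2 := by
    rw [dist_sq_two]; ring
  have hnv : (0:ℝ) < (Y 0 - X 0)^2 + (Y 1 - X 1)^2 := by
    rw [← hv]; positivity
  set detv := (Y 0 - X 0) * (P 1 - X 1) - (Y 1 - X 1) * (P 0 - X 0) with hdetv
  set t0 : ℝ := ((P 0 - X 0)*(Y 0 - X 0) + (P 1 - X 1)*(Y 1 - X 1)) /
      ((Y 0 - X 0)^2 + (Y 1 - X 1)^2) with ht0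
  set Q0 : EuclideanSpace ℝ (Fin 2) := t0 • (Y -ᵥ X) +ᵥ X with hQ0def
  have hQmem : Q0 ∈ (affineSpan ℝ ({X, Y} : Set (EuclideanSpace ℝ (Fin 2))) :
      Set (EuclideanSpace ℝ (Fin 2))) := smul_vsub_vadd_mem_affineSpan_pair t0 X Y
  have hQ0 : ∀ i, Q0 i = t0 * (Y i - X i) + X i := by
    intro i
    simp [hQ0def, PiLp.add_apply, PiLp.smul_apply, PiLp.sub_apply, smul_eq_mul]
  have hPQ2 : dist P Q0 ^ 2 = detv^2 / ((Y 0 - X 0)^2 + (Y 1 - X 1)^2) := by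
    rw [dist_sq_two, hQ0 0, hQ0 1, ht0, hdetv]
    field_simp
    ring
  have hPQ : dist P Q0 = |detv| / dist X Y := by
    have h1 : dist P Q0 ^ 2 = (|detv| / dist X Y)^2 := by
      rw [div_pow, sq_abs, hv, hPQ2]
    have h2 := (sq_eq_sq_iff_abs_eq_abs _ _).1 h1
    rwa [abs_of_nonneg dist_nonneg, abs_of_nonneg (by positivity)] at h2
  have hlow : ∀ q ∈ (affineSpan ℝ ({X, Y} : Set (EuclideanSpace ℝ (Fin 2))) :
      Set (EuclideanSpace ℝ (Fin 2))), |detv| / dist X Y ≤ dist P q := by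
    intro q hq
    obtain ⟨r, hr⟩ := vadd_left_mem_affineSpan_pair.mp
      (show (q -ᵥ X) +ᵥ X ∈ affineSpan ℝ ({X, Y} : Set (EuclideanSpace ℝ (Fin 2))) by
        rwa [vsub_vadd])
    have hq0 : ∀ i, q i = r * (Y i - X i) + X i := by
      intro i
      have h' := congrArg (fun v => v i) hr
      simp only [PiLp.smul_apply, PiLp.sub_apply, smul_eq_mul, vsub_eq_sub] at h'
      linarith [h']
    have hineq : detv^2 ≤ dist P q ^2 * dist X Y ^2 := by
      rw [dist_sq_two P q, hq0 0, hq0 1, hv, hdetv]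
      nlinarith [sq_nonneg ((P 0 - X 0 - r*(Y 0 - X 0))*(Y 0 - X 0)
        + (P 1 - X 1 - r*(Y 1 - X 1))*(Y 1 - X 1))]
    rw [div_le_iff₀ hd]
    calc |detv| = Real.sqrt (detv^2) := (Real.sqrt_sq_eq_abs _).symm
      _ ≤ Real.sqrt (dist P q ^2 * dist X Y ^2) := Real.sqrt_le_sqrt hineq
      _ = dist P q * dist X Y := by
          rw [show dist P q ^2 * dist X Y ^2 = (dist P q * dist X Y)^2 by ring,
            Real.sqrt_sq (by positivity)]
  refine le_antisymm ?_ ?_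
  · calc Metric.infDist P _ ≤ dist P Q0 := Metric.infDist_le_dist_of_mem hQmem
      _ = |detv| / dist X Y := hPQ
  · by_contra hcon
    push_neg at hcon
    obtain ⟨y, hy, hlt⟩ := (Metric.infDist_lt_iff
      ⟨X, subset_affineSpan ℝ _ (Set.mem_insert _ _)⟩).1 hcon
    exact absurd hlt (not_lt.2 (hlow y hy))

lemma abs_div_step (u v dAB dCD s detAB detCD : ℝ)
    (hdAB : 0 < dAB) (hdCD : 0 < dCD)
    (hu : detAB * (2*s) = u) (hv : detCD * (2*s) = v)
    (key2 : u^2 * dCD^2 = v^2 * dAB^2) (hs : s ≠ 0) :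
    |detAB| / dAB = |detCD| / dCD := by
  rw [div_eq_div_iff hdAB.ne' hdCD.ne']
  have h1 : |detAB| * dCD = |detAB * dCD| := by
    rw [abs_mul, abs_of_nonneg hdCD.le]
  have h2 : |detCD| * dAB = |detCD * dAB| := by
    rw [abs_mul, abs_of_nonneg hdAB.le]
  rw [h1, h2]
  apply (sq_eq_sq_iff_abs_eq_abs _ _).1
  have h2s : ((2*s)^2 : ℝ) ≠ 0 := by positivity
  apply mul_left_cancel₀ h2s
  linear_combination key2 + dCD^2*(detAB*(2*s) + u)*hu - dAB^2*(detCD*(2*s) + v)*hv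

lemma midpoint_coord (X Y : EuclideanSpace ℝ (Fin 2)) (i : Fin 2) :
    midpoint ℝ X Y i = (X i + Y i)/2 := by
  rw [midpoint_eq_smul_add, PiLp.smul_apply, PiLp.add_apply, smul_eq_mul, invOf_eq_inv]
  ring

end CyclicNewtonAux

namespace CyclicNewtonAux

lemma distToLine_formula (P X Y : EuclideanSpace ℝ (Fin 2)) (h : X ≠ Y) :
    distToLine P X Y
    = |(Y 0 - X 0) * (P 1 - X 1) - (Y 1 - X 1) * (P 0 - X 0)| / dist X Y :=
  distToLine_eq P X Y h

lemma key_half (A B C D O : EuclideanSpace ℝ (Fin 2)) (R : ℝ) (hR : 0 < R)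
    (hA : dist O A = R) (hB : dist O B = R) (hC : dist O C = R) (hD : dist O D = R)
    (hAB : A ≠ B) (hCD : C ≠ D) (hAC : A ≠ C) :
    distToLine ((dist B D / (dist A C + dist B D)) • midpoint ℝ A C +
      (dist A C / (dist A C + dist B D)) • midpoint ℝ B D) A B =
    distToLine ((dist B D / (dist A C + dist B D)) • midpoint ℝ A C +
      (dist A C / (dist A C + dist B D)) • midpoint ℝ B D) C D := by
  have hrho : (0:ℝ) < (A 0 - O 0)^2 + (A 1 - O 1)^2 := by
    have h := dist_sq_two A O
    rw [dist_comm A O, hA] at h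
    rw [← h]; positivity
  have hb' : (B 0 - O 0)^2 + (B 1 - O 1)^2 = (A 0 - O 0)^2 + (A 1 - O 1)^2 := by
    have h1 := dist_sq_two B O; have h2 := dist_sq_two A O
    rw [dist_comm B O, hB] at h1; rw [dist_comm A O, hA] at h2
    linarith
  have hc' : (C 0 - O 0)^2 + (C 1 - O 1)^2 = (A 0 - O 0)^2 + (A 1 - O 1)^2 := by
    have h1 := dist_sq_two C O; have h2 := dist_sq_two A O
    rw [dist_comm C O, hC] at h1; rw [dist_comm A O, hA] at h2
    linarith
  have hd' : (D 0 - O 0)^2 + (D 1 - O 1)^2 = (A 0 - O 0)^2 + (A 1 - O 1)^2 := by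
    have h1 := dist_sq_two D O; have h2 := dist_sq_two A O
    rw [dist_comm D O, hD] at h1; rw [dist_comm A O, hA] at h2
    linarith
  have hkey := scalarKey (A 0 - O 0) (A 1 - O 1) (B 0 - O 0) (B 1 - O 1)
    (C 0 - O 0) (C 1 - O 1) (D 0 - O 0) (D 1 - O 1)
    (dist A C) (dist B D) (dist A B ^ 2) (dist B C ^ 2) (dist C D ^ 2) (dist D A ^ 2)
    hrho hb' hc' hd'
    (by rw [dist_sq_two]; ring) (by rw [dist_sq_two]; ring)
    (by rw [dist_sq_two]; ring) (by rw [dist_sq_two]; ring)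
    (by rw [dist_sq_two]; ring) (by rw [dist_sq_two]; ring)
  have hsne : dist A C + dist B D ≠ 0 :=
    (add_pos_of_pos_of_nonneg (dist_pos.2 hAC) dist_nonneg).ne'
  have hi : ∀ i, ((dist B D / (dist A C + dist B D)) • midpoint ℝ A C +
      (dist A C / (dist A C + dist B D)) • midpoint ℝ B D) i
      = dist B D / (dist A C + dist B D) * ((A i + C i)/2)
        + dist A C / (dist A C + dist B D) * ((B i + D i)/2) := by
    intro i
    simp [PiLp.add_apply, PiLp.smul_apply, smul_eq_mul, midpoint_coord]
  rw [distToLine_formula _ _ _ hAB, distToLine_formula _ _ _ hCD]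
  refine abs_div_step
    (dist B D * ((B 0 - A 0)*(C 1 - A 1) - (B 1 - A 1)*(C 0 - A 0))
      + dist A C * ((B 0 - A 0)*(D 1 - A 1) - (B 1 - A 1)*(D 0 - A 0)))
    (dist B D * ((D 0 - C 0)*(A 1 - C 1) - (D 1 - C 1)*(A 0 - C 0))
      + dist A C * ((D 0 - C 0)*(B 1 - C 1) - (D 1 - C 1)*(B 0 - C 0)))
    (dist A B) (dist C D) (dist A C + dist B D) _ _
    (dist_pos.2 hAB) (dist_pos.2 hCD) ?_ ?_ ?_ hsne
  · rw [hi 0, hi 1]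
    field_simp
    ring
  · rw [hi 0, hi 1]
    field_simp
    ring
  · linear_combination hkey

end CyclicNewtonAux

/-- **Theorem 5.** In a convex cyclic quadrilateral ABCD with diagonals
e = AC, f = BD, the point I = (f/(e+f))·M + (e/(e+f))·N of segment MN (dividing
it in ratio MI : IN = e : f) is equidistant from the lines AB and CD, and
equidistant from the lines BC and DA. -/
theorem cyclic_incenters_coincide (A B C D O : EuclideanSpace ℝ (Fin 2)) (R : ℝ)
    (hconv : ConvexPosition A B C D)
    (hR : 0 < R)
    (hA : dist O A = R) (hB : dist O B = R) (hC : dist O C = R)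
    (hD : dist O D = R) :
    distToLine
        ((dist B D / (dist A C + dist B D)) • midpoint ℝ A C +
          (dist A C / (dist A C + dist B D)) • midpoint ℝ B D) A B =
      distToLine
        ((dist B D / (dist A C + dist B D)) • midpoint ℝ A C +
          (dist A C / (dist A C + dist B D)) • midpoint ℝ B D) C D ∧
    distToLine
        ((dist B D / (dist A C + dist B D)) • midpoint ℝ A C +
          (dist A C / (dist A C + dist B D)) • midpoint ℝ B D) B C =
      distToLine
        ((dist B D / (dist A C + dist B D)) • midpoint ℝ A C +
          (dist A C / (dist A C + dist B D)) • midpoint ℝ B D) D A := by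
  obtain ⟨h1, h2, h3, h4⟩ := hconv
  have hAB : A ≠ B := fun h => h1 (subset_convexHull ℝ _ (by rw [h]; simp))
  have hAC : A ≠ C := fun h => h1 (subset_convexHull ℝ _ (by rw [h]; simp))
  have hCD : C ≠ D := fun h => h3 (subset_convexHull ℝ _ (by rw [h]; simp))
  have hBC : B ≠ C := fun h => h2 (subset_convexHull ℝ _ (by rw [h]; simp))
  have hBD : B ≠ D := fun h => h2 (subset_convexHull ℝ _ (by rw [h]; simp))
  have hDA : D ≠ A := fun h => h4 (subset_convexHull ℝ _ (by rw [h]; simp))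
  constructor
  · exact CyclicNewtonAux.key_half A B C D O R hR hA hB hC hD hAB hCD hAC
  · have h := CyclicNewtonAux.key_half B C D A O R hR hB hC hD hA hBC hDA hBD
    rw [show dist C A = dist A C from dist_comm C A,
      show midpoint ℝ C A = midpoint ℝ A C from midpoint_comm C A,
      show dist B D + dist A C = dist A C + dist B D from add_comm _ _,
      show (dist A C / (dist A C + dist B D)) • midpoint ℝ B D +
          (dist B D / (dist A C + dist B D)) • midpoint ℝ A C
        = (dist B D / (dist A C + dist B D)) • midpoint ℝ A C +
          (dist A C / (dist A C + dist B D)) • midpoint ℝ B D from add_comm _ _] at h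
    exact h
end

section
/- Let A, B, C be three non-collinear points on a circle S in the Euclidean plane ℝ². Then there exists a unique point D on S such that D and B lie strictly on opposite sides of the line AC and dist(A,B) + dist(C,D) = dist(B,C) + dist(D,A); consequently the quadrilateral ABCD is cyclic and tangential, i.e., bicentric. -/
open Complex Real Set

noncomputable section BicentricAux

/-- The point at angle `θ` on the circle of radius `R` centered at `0` in `ℂ`. -/
def bicPt (R θ : ℝ) : ℂ := (R : ℂ) * Complex.exp ((θ : ℂ) * Complex.I)

abbrev BicGood {V : Type*} [NormedAddCommGroup V] [NormedSpace ℝ V]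
    (O A B C D : V) (R : ℝ) : Prop :=
  D ∈ Metric.sphere O R ∧
    (affineSpan ℝ ({A, C} : Set V)).SOppSide B D ∧
    dist A B + dist C D = dist B C + dist D A

lemma bicPt_abs (R θ : ℝ) (hR : 0 ≤ R) : ‖bicPt R θ‖ = R := by
  simp [bicPt, Complex.norm_exp_ofReal_mul_I, _root_.abs_of_nonneg hR]

lemma bicPt_re (R θ : ℝ) : (bicPt R θ).re = R * Real.cos θ := by
  simp [bicPt, Complex.exp_ofReal_mul_I_re]

lemma bicPt_im (R θ : ℝ) : (bicPt R θ).im = R * Real.sin θ := by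
  simp [bicPt, Complex.exp_ofReal_mul_I_im]

lemma bicPt_dist (R θ φ : ℝ) (hR : 0 ≤ R) :
    dist (bicPt R θ) (bicPt R φ) = 2 * R * |Real.sin ((θ - φ) / 2)| := by
  set m : ℂ := (((θ + φ) / 2 : ℝ) : ℂ) with hm
  set d : ℂ := (((θ - φ) / 2 : ℝ) : ℂ) with hd
  have key : bicPt R θ - bicPt R φ =
      (R : ℂ) * Complex.exp (m * Complex.I) * (2 * Complex.sin d * Complex.I) := by
    have e1 : (θ : ℂ) * Complex.I = m * Complex.I + d * Complex.I := by
      rw [hm, hd]; push_cast; ring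
    have e2 : (φ : ℂ) * Complex.I = m * Complex.I + -d * Complex.I := by
      rw [hm, hd]; push_cast; ring
    calc bicPt R θ - bicPt R φ
        = (R : ℂ) * (Complex.exp (m * Complex.I + d * Complex.I)
            - Complex.exp (m * Complex.I + -d * Complex.I)) := by
          rw [bicPt, bicPt, ← e1, ← e2]; ring
      _ = (R : ℂ) * Complex.exp (m * Complex.I)
            * (Complex.exp (d * Complex.I) - Complex.exp (-d * Complex.I)) := by
          rw [Complex.exp_add, Complex.exp_add]; ring
      _ = (R : ℂ) * Complex.exp (m * Complex.I) * (2 * Complex.sin d * Complex.I) := by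
          rw [Complex.exp_mul_I, Complex.exp_mul_I, Complex.exp_mul_I, Complex.cos_neg, Complex.sin_neg]
          ring
  rw [Complex.dist_eq, key, hm, hd, ← Complex.ofReal_sin]
  simp only [norm_mul, Complex.norm_exp_ofReal_mul_I, Complex.norm_two, Complex.norm_I,
    Complex.norm_real, Real.norm_eq_abs, _root_.abs_of_nonneg hR]
  ring


lemma bicPt_mem_line_iff {R α : ℝ} (hR : 0 < R) (hα : α ∈ Set.Ioo 0 π) (z : ℂ) :
    z ∈ affineSpan ℝ ({bicPt R α, bicPt R (-α)} : Set ℂ) ↔ z.re = R * Real.cos α := by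
  have hsin : 0 < Real.sin α := Real.sin_pos_of_pos_of_lt_pi hα.1 hα.2
  set A := bicPt R α with hA
  set C := bicPt R (-α) with hC
  have hCA_re : (C - A).re = 0 := by
    simp [Complex.sub_re, hA, hC, bicPt_re, Real.cos_neg]
  have hCA_im : (C - A).im = -(2 * R * Real.sin α) := by
    simp [Complex.sub_im, hA, hC, bicPt_im, Real.sin_neg]; ring
  have him : (C - A).im ≠ 0 := by
    rw [hCA_im]
    exact neg_ne_zero.2 (by positivity)
  have hiff : ((z - A) +ᵥ A ∈ affineSpan ℝ ({A, C} : Set ℂ)) ↔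
      ∃ r : ℝ, r • (C -ᵥ A) = z - A := vadd_left_mem_affineSpan_pair
  have hz : (z - A) +ᵥ A = z := by simp
  rw [hz] at hiff
  rw [hiff]
  constructor
  · rintro ⟨r, hr⟩
    have := congrArg Complex.re hr
    simp only [vsub_eq_sub, Complex.smul_re, smul_eq_mul, hCA_re, mul_zero, Complex.sub_re] at this
    have hAre : A.re = R * Real.cos α := by rw [hA, bicPt_re]
    linarith
  · intro hre
    refine ⟨(z - A).im / (C - A).im, ?_⟩
    apply Complex.ext
    · simp only [vsub_eq_sub, Complex.smul_re, smul_eq_mul, hCA_re, mul_zero, Complex.sub_re]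
      rw [hA, bicPt_re]
      linarith
    · simp only [vsub_eq_sub, Complex.smul_im]
      field_simp
      rw [smul_eq_mul, div_mul_cancel₀ _ him]

lemma bicPt_sOppSide_iff {R α : ℝ} (hR : 0 < R) (hα : α ∈ Set.Ioo 0 π) {B : ℂ}
    (hBre : R * Real.cos α < B.re) (D : ℂ) :
    (affineSpan ℝ ({bicPt R α, bicPt R (-α)} : Set ℂ)).SOppSide B D ↔
      D.re < R * Real.cos α := by
  set s := affineSpan ℝ ({bicPt R α, bicPt R (-α)} : Set ℂ) with hs
  have hmem : ∀ z : ℂ, z ∈ s ↔ z.re = R * Real.cos α := bicPt_mem_line_iff hR hα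
  have hre_lineMap : ∀ (x y : ℂ) (t : ℝ),
      (AffineMap.lineMap x y t : ℂ).re = x.re + t * (y.re - x.re) := by
    intro x y t
    simp only [AffineMap.lineMap_apply, vsub_eq_sub, vadd_eq_add, Complex.add_re,
      Complex.smul_re, smul_eq_mul, Complex.sub_re]
    ring
  constructor
  · intro h
    obtain ⟨p, hp, hsbtw⟩ := h.exists_sbtw
    obtain ⟨t, ⟨ht0, ht1⟩, hpt⟩ := hsbtw.wbtw
    have hpre : p.re = R * Real.cos α := (hmem p).1 hp
    have hDs : D.re ≠ R * Real.cos α := fun hc => h.2.2 ((hmem D).2 hc)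
    have ht1' : t ≠ 1 := by
      rintro rfl
      exact hsbtw.ne_right (by simpa using hpt.symm)
    have hre : B.re + t * (D.re - B.re) = R * Real.cos α := by
      rw [← hre_lineMap B D t, hpt, hpre]
    rcases lt_or_gt_of_ne hDs with h' | h'
    · exact h'
    · exfalso
      have ht1'' : t < 1 := lt_of_le_of_ne ht1 ht1'
      nlinarith
  · intro hD
    have hBs : B ∉ s := fun hc => by
      have := (hmem B).1 hc; linarith
    set t : ℝ := (B.re - R * Real.cos α) / (B.re - D.re) with htdef
    have hBD : 0 < B.re - D.re := by linarith
    have ht0 : 0 < t := by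
      apply div_pos <;> linarith
    have ht1 : t < 1 := by
      rw [div_lt_one hBD]; linarith
    set p : ℂ := AffineMap.lineMap B D t with hpdef
    have hpre : p.re = R * Real.cos α := by
      rw [hpdef, hre_lineMap, htdef]
      field_simp
      ring
    have hps : p ∈ s := (hmem p).2 hpre
    have hwbtw : Wbtw ℝ B p D := ⟨t, ⟨ht0.le, ht1.le⟩, rfl⟩
    have hsbtw : Sbtw ℝ B p D := by
      refine ⟨hwbtw, fun hc => ?_, fun hc => ?_⟩
      · rw [hc] at hpre; linarith
      · rw [hc] at hpre; linarith
    exact hsbtw.sOppSide_of_notMem_of_mem hBs hps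


lemma bicPt_pitot_val {R α θ : ℝ} (hR : 0 < R) (hα : α ∈ Set.Ioo 0 π)
    (hθ : θ ∈ Set.Ioo α (2 * π - α)) :
    dist (bicPt R (-α)) (bicPt R θ) - dist (bicPt R θ) (bicPt R α) =
      4 * R * Real.sin (α / 2) * Real.cos (θ / 2) := by
  rw [bicPt_dist _ _ _ hR.le, bicPt_dist _ _ _ hR.le]
  have h1 : |Real.sin ((-α - θ) / 2)| = Real.sin ((θ + α) / 2) := by
    rw [show (-α - θ) / 2 = -((θ + α) / 2) by ring, Real.sin_neg, abs_neg]
    exact _root_.abs_of_nonneg (Real.sin_nonneg_of_nonneg_of_le_pi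
      (by nlinarith [hα.1, hθ.1]) (by nlinarith [hθ.2, hα.1]))
  have h2 : |Real.sin ((θ - α) / 2)| = Real.sin ((θ - α) / 2) :=
    _root_.abs_of_nonneg (Real.sin_nonneg_of_nonneg_of_le_pi
      (by nlinarith [hθ.1]) (by nlinarith [hθ.2, hα.1]))
  rw [h1, h2]
  have h3 := Real.sin_sub_sin ((θ + α) / 2) ((θ - α) / 2)
  rw [show ((θ + α) / 2 - (θ - α) / 2) / 2 = α / 2 by ring,
    show ((θ + α) / 2 + (θ - α) / 2) / 2 = θ / 2 by ring] at h3
  linear_combination (2 * R) * h3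

set_option maxHeartbeats 1600000 in
lemma bicPt_core {R α : ℝ} (hR : 0 < R) (hα : α ∈ Set.Ioo 0 π) {B : ℂ}
    (hBabs : ‖B‖ = R) (hBre : R * Real.cos α < B.re) :
    ∃! D : ℂ, BicGood (0 : ℂ) (bicPt R α) B (bicPt R (-α)) D R := by
  have hπ := Real.pi_pos
  have hα1 := hα.1
  have hα2 := hα.2
  set A := bicPt R α with hA
  set C := bicPt R (-α) with hC
  have hs2 : 0 < Real.sin (α / 2) :=
    Real.sin_pos_of_pos_of_lt_pi (by linarith [hα.1]) (by linarith [hα.2])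
  have hc2 : 0 < Real.cos (α / 2) :=
    Real.cos_pos_of_mem_Ioo ⟨by linarith [hα.1], by linarith [hα.2]⟩
  have hsinα : Real.sin α = 2 * Real.sin (α / 2) * Real.cos (α / 2) := by
    have := Real.sin_two_mul (α / 2)
    rw [show 2 * (α / 2) = α by ring] at this
    linarith
  have hsinαpos : 0 < Real.sin α := Real.sin_pos_of_pos_of_lt_pi hα.1 hα.2
  have hANeC : A ≠ C := by
    intro h
    have := congrArg Complex.im h
    rw [hA, hC, bicPt_im, bicPt_im, Real.sin_neg] at this
    nlinarith
  have hdAC : dist A C = 2 * R * Real.sin α := by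
    rw [hA, hC, bicPt_dist _ _ _ hR.le, show (α - -α) / 2 = α by ring,
      _root_.abs_of_nonneg hsinαpos.le]
  have hBnotline : B.re ≠ R * Real.cos α := ne_of_gt hBre
  set k : ℝ := dist B C - dist A B with hk
  have hk1 : k < 2 * R * Real.sin α := by
    rw [hk]
    have t1 : dist B C ≤ dist B A + dist A C := dist_triangle B A C
    rcases eq_or_lt_of_le t1 with heq | hlt
    · exfalso
      have hw : Wbtw ℝ B A C := dist_add_dist_eq_iff.mp heq.symm
      have hcol : Collinear ℝ ({B, A, C} : Set ℂ) := hw.collinear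
      have hBmem : B ∈ affineSpan ℝ ({A, C} : Set ℂ) :=
        hcol.mem_affineSpan_of_mem_of_ne (by simp) (by simp) (by simp) hANeC
      exact hBnotline ((bicPt_mem_line_iff hR hα B).1 hBmem)
    · rw [dist_comm B A] at hlt
      linarith [hdAC]
  have hk2 : -(2 * R * Real.sin α) < k := by
    rw [hk]
    have t1 : dist A B ≤ dist A C + dist C B := dist_triangle A C B
    rcases eq_or_lt_of_le t1 with heq | hlt
    · exfalso
      have hw : Wbtw ℝ A C B := dist_add_dist_eq_iff.mp heq.symm
      have hcol : Collinear ℝ ({A, C, B} : Set ℂ) := hw.collinear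
      have hBmem : B ∈ affineSpan ℝ ({A, C} : Set ℂ) :=
        hcol.mem_affineSpan_of_mem_of_ne (by simp) (by simp) (by simp) hANeC
      exact hBnotline ((bicPt_mem_line_iff hR hα B).1 hBmem)
    · rw [dist_comm C B] at hlt
      linarith [hdAC]
  set κ : ℝ := k / (4 * R * Real.sin (α / 2)) with hκdef
  have h4Rs : 0 < 4 * R * Real.sin (α / 2) := by positivity
  have hκub : κ < Real.cos (α / 2) := by
    rw [hκdef, div_lt_iff₀ h4Rs]
    nlinarith
  have hκlb : -Real.cos (α / 2) < κ := by
    rw [hκdef, lt_div_iff₀ h4Rs]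
    nlinarith
  have hκ1 : -1 ≤ κ := by nlinarith [Real.cos_le_one (α / 2)]
  have hκ1' : κ ≤ 1 := by nlinarith [Real.cos_le_one (α / 2)]
  set θ₀ : ℝ := 2 * Real.arccos κ with hθ₀def
  have hθhalf : θ₀ / 2 = Real.arccos κ := by rw [hθ₀def]; ring
  have hcosθ₀ : Real.cos (θ₀ / 2) = κ := by rw [hθhalf, Real.cos_arccos hκ1 hκ1']
  have harc1 : α / 2 < Real.arccos κ := by
    by_contra h
    push_neg at h
    have := Real.cos_le_cos_of_nonneg_of_le_pi (Real.arccos_nonneg κ)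
      (by linarith) h
    rw [Real.cos_arccos hκ1 hκ1'] at this
    linarith
  have harc2 : Real.arccos κ < π - α / 2 := by
    by_contra h
    push_neg at h
    have := Real.cos_le_cos_of_nonneg_of_le_pi (by linarith)
      (Real.arccos_le_pi κ) h
    rw [Real.cos_arccos hκ1 hκ1', Real.cos_pi_sub] at this
    linarith
  have hθ₀mem : θ₀ ∈ Set.Ioo α (2 * π - α) := ⟨by linarith, by linarith⟩
  have key : ∀ θ : ℝ, θ ∈ Set.Ioo α (2 * π - α) →
      (BicGood (0 : ℂ) A B C (bicPt R θ) R ↔ Real.cos (θ / 2) = κ) := by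
    intro θ hθ
    have hre : (bicPt R θ).re < R * Real.cos α := by
      rw [bicPt_re]
      have hcc : Real.cos θ < Real.cos α := by
        have e1 := Real.cos_two_mul (θ / 2)
        rw [show 2 * (θ / 2) = θ by ring] at e1
        have e2 := Real.cos_two_mul (α / 2)
        rw [show 2 * (α / 2) = α by ring] at e2
        have hbl : -Real.cos (α / 2) < Real.cos (θ / 2) := by
          have := Real.cos_lt_cos_of_nonneg_of_le_pi (x := θ / 2) (y := π - α / 2)
            (by linarith [hθ.1]) (by linarith) (by linarith [hθ.2])
          rw [Real.cos_pi_sub] at this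
          linarith
        have hbu : Real.cos (θ / 2) < Real.cos (α / 2) := by
          exact Real.cos_lt_cos_of_nonneg_of_le_pi (by linarith)
            (by linarith [hθ.2]) (by linarith [hθ.1])
        nlinarith [hbl, hbu]
      nlinarith
    have hv := bicPt_pitot_val hR hα hθ
    constructor
    · rintro ⟨-, -, hpq⟩
      have h4 : 4 * R * Real.sin (α / 2) * Real.cos (θ / 2) = k := by
        rw [hk]; rw [← hA, ← hC] at hv; linarith
      rw [hκdef, eq_div_iff (ne_of_gt h4Rs)]
      linarith
    · intro hcos
      refine ⟨?_, ?_, ?_⟩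
      · simp [Metric.mem_sphere, Complex.dist_eq, bicPt_abs _ _ hR.le]
      · exact (bicPt_sOppSide_iff hR hα hBre _).2 hre
      · rw [← hA, ← hC] at hv
        rw [hcos] at hv
        have hκk : κ * (4 * R * Real.sin (α / 2)) = k := by
          rw [hκdef]; field_simp
        have hkk : dist B C - dist A B = k := by rw [hk]
        linarith
  refine ⟨bicPt R θ₀, (key θ₀ hθ₀mem).2 hcosθ₀, ?_⟩
  intro D' hD'
  have habs : ‖D'‖ = R := by
    have := hD'.1
    rw [Metric.mem_sphere, Complex.dist_eq, sub_zero] at this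
    exact this
  set a : ℝ := Complex.arg D' with hadef
  set θ' : ℝ := if 0 ≤ a then a else a + 2 * π with hθ'def
  have hbounds : 0 ≤ θ' ∧ θ' < 2 * π := by
    rw [hθ'def]
    split_ifs with h
    · exact ⟨h, by linarith [Complex.arg_le_pi D']⟩
    · push_neg at h
      exact ⟨by linarith [Complex.neg_pi_lt_arg D'], by linarith⟩
  have hD'eq : D' = bicPt R θ' := by
    rw [bicPt, hθ'def]
    split_ifs with h
    · rw [← habs, hadef]
      exact (Complex.norm_mul_exp_arg_mul_I D').symm
    · rw [← habs, hadef]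
      push_cast
      rw [add_mul, Complex.exp_add, Complex.exp_two_pi_mul_I, mul_one]
      exact (Complex.norm_mul_exp_arg_mul_I D').symm
  have hD're : D'.re < R * Real.cos α :=
    (bicPt_sOppSide_iff hR hα hBre D').1 hD'.2.1
  have hcosθ' : Real.cos θ' < Real.cos α := by
    have h1 : (bicPt R θ').re < R * Real.cos α := hD'eq ▸ hD're
    rw [bicPt_re] at h1
    exact (mul_lt_mul_iff_right₀ hR).mp h1
  have hθ'mem : θ' ∈ Set.Ioo α (2 * π - α) := by
    constructor
    · by_contra h
      push_neg at h
      have := Real.cos_le_cos_of_nonneg_of_le_pi hbounds.1 (by linarith) h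
      linarith
    · by_contra h
      push_neg at h
      have h2 : Real.cos (2 * π - θ') = Real.cos θ' := Real.cos_two_pi_sub θ'
      have := Real.cos_le_cos_of_nonneg_of_le_pi (x := 2 * π - θ') (y := α)
        (by linarith [hbounds.2]) (by linarith) (by linarith)
      linarith
  have hcos' : Real.cos (θ' / 2) = κ := (key θ' hθ'mem).1 (hD'eq ▸ hD')
  have e := Real.arccos_cos (x := θ' / 2) (by linarith [hθ'mem.1]) (by linarith [hθ'mem.2])
  rw [hcos'] at e
  have hθeq : θ' = θ₀ := by linarith [e, hθhalf]
  rw [hD'eq, hθeq]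


lemma span_pair_map {V W : Type*} [NormedAddCommGroup V] [NormedSpace ℝ V]
    [NormedAddCommGroup W] [NormedSpace ℝ W] (φ : V ≃ᵃ[ℝ] W) (A C : V) :
    affineSpan ℝ ({φ A, φ C} : Set W) =
      (affineSpan ℝ ({A, C} : Set V)).map (φ : V →ᵃ[ℝ] W) := by
  rw [AffineSubspace.map_span, Set.image_pair]
  rfl

lemma mem_line_of_map {V W : Type*} [NormedAddCommGroup V] [NormedSpace ℝ V]
    [NormedAddCommGroup W] [NormedSpace ℝ W] (φ : V ≃ᵃ[ℝ] W) {A C z : V}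
    (h : φ z ∈ affineSpan ℝ ({φ A, φ C} : Set W)) :
    z ∈ affineSpan ℝ ({A, C} : Set V) := by
  rw [span_pair_map φ A C] at h
  obtain ⟨q, hq, hqe⟩ := AffineSubspace.mem_map.1 h
  rwa [← φ.injective hqe]

lemma bicGood_map {V W : Type*} [NormedAddCommGroup V] [NormedSpace ℝ V]
    [NormedAddCommGroup W] [NormedSpace ℝ W] (φ : V ≃ᵃⁱ[ℝ] W) (O A B C D : V) (R : ℝ) :
    BicGood (φ O) (φ A) (φ B) (φ C) (φ D) R ↔ BicGood O A B C D R := by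
  unfold BicGood
  apply and_congr
  · rw [Metric.mem_sphere, Metric.mem_sphere, φ.dist_map]
  apply and_congr
  · have hc : ∀ x : V, φ x = φ.toAffineEquiv x := fun _ => rfl
    rw [hc A, hc B, hc C, hc D, span_pair_map φ.toAffineEquiv A C]
    exact AffineEquiv.sOppSide_map_iff φ.toAffineEquiv
  · rw [φ.dist_map, φ.dist_map, φ.dist_map, φ.dist_map]

lemma bicGood_exu_map {V : Type*} [NormedAddCommGroup V] [NormedSpace ℝ V]
    (φ : ℂ ≃ᵃⁱ[ℝ] V) {O A B C : ℂ} {R : ℝ}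
    (h : ∃! D : ℂ, BicGood O A B C D R) :
    ∃! D : V, BicGood (φ O) (φ A) (φ B) (φ C) D R := by
  obtain ⟨D, hD, huniq⟩ := h
  refine ⟨φ D, (bicGood_map φ O A B C D R).2 hD, ?_⟩
  intro y hy
  have h1 : BicGood O A B C (φ.symm y) R := by
    refine (bicGood_map φ O A B C (φ.symm y) R).1 ?_
    rwa [φ.apply_symm_apply]
  have h2 := huniq _ h1
  calc y = φ (φ.symm y) := (φ.apply_symm_apply y).symm
    _ = φ D := by rw [h2]

lemma bicPt_rot (R t s : ℝ) :
    rotation (Circle.exp s) (bicPt R t) = bicPt R (t + s) := by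
  rw [rotation_apply, Circle.coe_exp, bicPt, bicPt, Complex.ofReal_add, add_mul,
    Complex.exp_add]
  ring

lemma bicPt_conj (R t : ℝ) : (starRingEnd ℂ) (bicPt R t) = bicPt R (-t) := by
  rw [bicPt, bicPt, map_mul, ← Complex.exp_conj, map_mul, Complex.conj_I,
    Complex.conj_ofReal, Complex.conj_ofReal, Complex.ofReal_neg]
  ring_nf

lemma bicPt_negconj (R t : ℝ) :
    (Complex.conjLIE.trans (LinearIsometryEquiv.neg ℝ)) (bicPt R t) = bicPt R (π - t) := by
  rw [LinearIsometryEquiv.trans_apply, Complex.conjLIE_apply]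
  rw [show ∀ z : ℂ, (LinearIsometryEquiv.neg ℝ) z = -z from fun _ => rfl, bicPt_conj]
  rw [bicPt, bicPt, Complex.ofReal_sub, sub_mul, Complex.exp_sub, Complex.ofReal_neg, neg_mul,
    Complex.exp_neg, Complex.exp_pi_mul_I]
  field_simp

lemma bicPt_sub_two_pi (R t : ℝ) : bicPt R (t - 2 * π) = bicPt R t := by
  rw [bicPt, bicPt, Complex.ofReal_sub, sub_mul, Complex.exp_sub]
  norm_num [Complex.exp_two_pi_mul_I]

lemma bicPt_eq_self (R : ℝ) (hR : 0 ≤ R) (z : ℂ) (hz : ‖z‖ = R) :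
    z = bicPt R (Complex.arg z) := by
  rw [bicPt, ← hz]
  exact (Complex.norm_mul_exp_arg_mul_I z).symm

end BicentricAux

/-- **Theorem 6.** Let A, B, C be three non-collinear points on a circle of
center O and radius R > 0. There exists a unique point D on that circle lying
strictly on the opposite side of the line AC from B such that the Pitot
relation AB + CD = BC + DA holds (so that the cyclic quadrilateral ABCD is
also tangential, hence bicentric). -/
theorem exists_unique_bicentric_vertex
    (O A B C : EuclideanSpace ℝ (Fin 2)) (R : ℝ) (hR : 0 < R)
    (hA : A ∈ Metric.sphere O R) (hB : B ∈ Metric.sphere O R)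
    (hC : C ∈ Metric.sphere O R)
    (hncol : ¬ Collinear ℝ ({A, B, C} : Set (EuclideanSpace ℝ (Fin 2)))) :
    ∃! D : EuclideanSpace ℝ (Fin 2),
      D ∈ Metric.sphere O R ∧
      (affineSpan ℝ ({A, C} : Set (EuclideanSpace ℝ (Fin 2)))).SOppSide B D ∧
      dist A B + dist C D = dist B C + dist D A := by
  have hπ := Real.pi_pos
  set ψ : EuclideanSpace ℝ (Fin 2) ≃ₗᵢ[ℝ] ℂ := Complex.orthonormalBasisOneI.repr.symm with hψdef
  set a : ℂ := ψ A - ψ O with hadef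
  set b : ℂ := ψ B - ψ O with hbdef
  set c : ℂ := ψ C - ψ O with hcdef
  have habs : ∀ (X : EuclideanSpace ℝ (Fin 2)) (x : ℂ), X ∈ Metric.sphere O R → x = ψ X - ψ O → ‖x‖ = R := by
    intro X x hX hx
    rw [hx, ← map_sub, ψ.norm_map, ← dist_eq_norm]
    exact hX
  have habs_a : ‖a‖ = R := habs A a hA hadef
  have habs_b : ‖b‖ = R := habs B b hB hbdef
  have habs_c : ‖c‖ = R := habs C c hC hcdef
  have hAC : A ≠ C := by
    intro h
    refine hncol (Collinear.subset ?_ (collinear_pair ℝ A B))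
    rw [h]
    intro x hx
    simp only [Set.mem_insert_iff, Set.mem_singleton_iff] at hx ⊢
    tauto
  have hac : a ≠ c := by
    intro h
    apply hAC
    have h2 : ψ A = ψ C := by
      have := congrArg (· + ψ O) h
      simpa [hadef, hcdef, sub_add_cancel] using this
    exact ψ.injective h2
  -- the affine equivalence from ℂ back to E, given a linear isometry g of ℂ
  have transfer : ∀ g : ℂ ≃ₗᵢ[ℝ] ℂ, ∃ φ : ℂ ≃ᵃⁱ[ℝ] EuclideanSpace ℝ (Fin 2),
      φ (g a) = A ∧ φ (g b) = B ∧ φ (g c) = C ∧ φ 0 = O := by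
    intro g
    refine ⟨((g.symm.trans ψ.symm).toAffineIsometryEquiv).trans
      (AffineIsometryEquiv.constVAdd ℝ (EuclideanSpace ℝ (Fin 2)) O), ?_, ?_, ?_, ?_⟩ <;>
      simp [AffineIsometryEquiv.coe_trans, hadef, hbdef, hcdef,
        LinearIsometryEquiv.coe_toAffineIsometryEquiv, AffineIsometryEquiv.coe_constVAdd,
        Function.comp] <;> abel
  -- non-collinearity transferred: the rotated B is never on the rotated line AC
  have hside : ∀ α' : ℝ, α' ∈ Set.Ioo 0 π → ∀ g : ℂ ≃ₗᵢ[ℝ] ℂ,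
      g a = bicPt R α' → g c = bicPt R (-α') → (g b).re ≠ R * Real.cos α' := by
    intro α' hα' g hga hgc hre
    have h1 : g b ∈ affineSpan ℝ ({bicPt R α', bicPt R (-α')} : Set ℂ) :=
      (bicPt_mem_line_iff hR hα' _).2 hre
    rw [← hga, ← hgc] at h1
    obtain ⟨φ, hφa, hφb, hφc, -⟩ := transfer g
    have h2 : b ∈ affineSpan ℝ ({a, c} : Set ℂ) := by
      refine mem_line_of_map (φ := g.toLinearEquiv.toAffineEquiv) ?_
      exact h1
    have h3 : B ∈ affineSpan ℝ ({A, C} : Set (EuclideanSpace ℝ (Fin 2))) := by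
      obtain ⟨φ, hφa, hφb, hφc, -⟩ := transfer (LinearIsometryEquiv.refl ℝ ℂ)
      have h4 : φ b ∈ affineSpan ℝ ({φ a, φ c} : Set (EuclideanSpace ℝ (Fin 2))) := by
        have hmap : ∀ x : ℂ, φ x = φ.toAffineEquiv x := fun _ => rfl
        rw [hmap a, hmap b, hmap c, span_pair_map φ.toAffineEquiv a c]
        exact AffineSubspace.mem_map.2 ⟨b, h2, rfl⟩
      simp only [LinearIsometryEquiv.coe_refl, id_eq] at hφa hφb hφc
      rwa [hφa, hφb, hφc] at h4
    exact hncol (Collinear.subset (by intro x hx; simp at hx ⊢; tauto)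
      (collinear_insert_of_mem_affineSpan_pair h3))
  -- construct the normalizing rotation
  set aa : ℝ := Complex.arg a with haa
  set cc : ℝ := Complex.arg c with hcc
  set δ : ℝ := (aa - cc) / 2 with hδdef
  have haabound : -π < aa ∧ aa ≤ π := ⟨Complex.neg_pi_lt_arg a, Complex.arg_le_pi a⟩
  have hccbound : -π < cc ∧ cc ≤ π := ⟨Complex.neg_pi_lt_arg c, Complex.arg_le_pi c⟩
  have hδbound : -π < δ ∧ δ < π := by
    constructor <;> · rw [hδdef]; cases haabound; cases hccbound; linarith
  have hδne : δ ≠ 0 := by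
    intro h
    have heq : aa = cc := by
      rw [hδdef] at h
      linarith [h]
    apply hac
    rw [bicPt_eq_self R hR.le a habs_a, bicPt_eq_self R hR.le c habs_c, ← haa, ← hcc, heq]
  set g₀ : ℂ ≃ₗᵢ[ℝ] ℂ := rotation (Circle.exp (-(aa + cc) / 2)) with hg₀def
  have hg₀a : g₀ a = bicPt R δ := by
    rw [hg₀def, bicPt_eq_self R hR.le a habs_a, ← haa, bicPt_rot]
    congr 1
    rw [hδdef]; ring
  have hg₀c : g₀ c = bicPt R (-δ) := by
    rw [hg₀def, bicPt_eq_self R hR.le c habs_c, ← hcc, bicPt_rot]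
    congr 1
    rw [hδdef]; ring
  obtain ⟨α₁, hα₁, g₁, hg₁a, hg₁c⟩ : ∃ α₁ ∈ Set.Ioo 0 π, ∃ g₁ : ℂ ≃ₗᵢ[ℝ] ℂ,
      g₁ a = bicPt R α₁ ∧ g₁ c = bicPt R (-α₁) := by
    rcases lt_or_gt_of_ne hδne with h | h
    · refine ⟨-δ, ⟨by linarith, by linarith [hδbound.1]⟩, g₀.trans Complex.conjLIE, ?_, ?_⟩
      · rw [LinearIsometryEquiv.trans_apply, hg₀a, Complex.conjLIE_apply, bicPt_conj]
      · rw [LinearIsometryEquiv.trans_apply, hg₀c, Complex.conjLIE_apply, bicPt_conj, neg_neg]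
    · exact ⟨δ, ⟨h, hδbound.2⟩, g₀, hg₀a, hg₀c⟩
  obtain ⟨α₂, hα₂, g₂, hg₂a, hg₂c, hg₂b⟩ : ∃ α₂ ∈ Set.Ioo 0 π, ∃ g₂ : ℂ ≃ₗᵢ[ℝ] ℂ,
      g₂ a = bicPt R α₂ ∧ g₂ c = bicPt R (-α₂) ∧ R * Real.cos α₂ < (g₂ b).re := by
    rcases lt_trichotomy ((g₁ b).re) (R * Real.cos α₁) with h | h | h
    · refine ⟨π - α₁, ⟨by linarith [hα₁.2], by linarith [hα₁.1]⟩,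
        g₁.trans (Complex.conjLIE.trans (LinearIsometryEquiv.neg ℝ)), ?_, ?_, ?_⟩
      · rw [LinearIsometryEquiv.trans_apply, hg₁a, bicPt_negconj]
      · rw [LinearIsometryEquiv.trans_apply, hg₁c, bicPt_negconj,
          show π - -α₁ = π + α₁ by ring,
          show -(π - α₁) = (π + α₁) - 2 * π by ring, bicPt_sub_two_pi]
      · rw [LinearIsometryEquiv.trans_apply, Real.cos_pi_sub]
        have hre : ((Complex.conjLIE.trans (LinearIsometryEquiv.neg ℝ)) (g₁ b)).re
            = -((g₁ b).re) := by
          simp [Complex.conjLIE_apply]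
        rw [hre]
        linarith
    · exact absurd h (hside α₁ hα₁ g₁ hg₁a hg₁c)
    · exact ⟨α₁, hα₁, g₁, hg₁a, hg₁c, h⟩
  have habs_gb : ‖g₂ b‖ = R := by
    rw [g₂.norm_map, habs_b]
  have hexu := bicPt_core hR hα₂ habs_gb hg₂b
  rw [← hg₂a, ← hg₂c] at hexu
  obtain ⟨φ, hφa, hφb, hφc, hφO⟩ := transfer g₂
  have hfinal := bicGood_exu_map φ hexu
  rw [hφa, hφb, hφc, hφO] at hfinal
  exact hfinal
end

section
/- Let A, B, C, θ be real numbers with A + B + C = π and 0 < B < π. Then sin C + sin θ = sin A + sin(B − θ) if and only if sin(B/2 − θ) = sin((C − A)/2) · tan(B/2). -/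
open Real

/-- The trigonometric computation (equation (20)) behind the Euclidean
construction of Section 6: for angles A + B + C = π with 0 < B < π,
sin C + sin θ = sin A + sin(B − θ) iff
sin(B/2 − θ) = sin((C − A)/2)·tan(B/2). -/
theorem tangential_condition_trig (A B C θ : ℝ)
    (hsum : A + B + C = π) (hB0 : 0 < B) (hBπ : B < π) :
    sin C + sin θ = sin A + sin (B - θ) ↔
      sin (B / 2 - θ) = sin ((C - A) / 2) * tan (B / 2) := by
  have hc : 0 < cos (B / 2) := by
    apply cos_pos_of_mem_Ioo
    constructor <;> [linarith [pi_pos]; linarith]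
  have h1 : sin C - sin A = 2 * sin ((C - A) / 2) * sin (B / 2) := by
    rw [sin_sub_sin]
    have : (C + A) / 2 = π / 2 - B / 2 := by linarith
    rw [this, cos_pi_div_two_sub]
  have h2 : sin (B - θ) - sin θ = 2 * sin (B / 2 - θ) * cos (B / 2) := by
    rw [sin_sub_sin]
    ring_nf
  rw [tan_eq_sin_div_cos]
  rw [mul_div_assoc', eq_div_iff hc.ne']
  constructor <;> intro h <;> nlinarith [h1, h2, hc]
end
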